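/- Two directed acyclic graphs G and H on vertex set [p] satisfy c_G = c_H if and only if c_G(S) = c_H(S) for all subsets S of [p] with |S| ∈ {2, 3}. -/

import Mathlib

open scoped Classical

/-- A directed acyclic graph on vertex set `Fin p`. -/
structure DAGraph (p : ℕ) where
  E : Fin p → Fin p → Prop
  acyclic : ∀ i, ¬ Relation.TransGen E i i

/-- The characteristic imset of a directed graph given by the relation `E`. -/
noncomputable def imsetRel {p : ℕ} (E : Fin p → Fin p → Prop) (S : Finset (Fin p)) : ℝ :=
  if ∃ i ∈ S, ∀ j ∈ S, j ≠ i → E j i then 1 else 0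

/-- The skeleton (underlying undirected graph) of a DAG. -/
def DAGraph.skeleton {p : ℕ} (G : DAGraph p) : SimpleGraph (Fin p) where
  Adj a b := G.E a b ∨ G.E b a
  symm := ⟨fun a b h => Or.symm h⟩
  loopless := ⟨fun a (h : G.E a a ∨ G.E a a) =>
    h.elim (fun h' => G.acyclic a (Relation.TransGen.single h'))
      (fun h' => G.acyclic a (Relation.TransGen.single h'))⟩

/-- The characteristic imset of a DAG. -/
noncomputable def DAGraph.cim {p : ℕ} (G : DAGraph p) : Finset (Fin p) → ℝ := imsetRel G.E

/-- `G.vStruct a b c` : `a → b ← c` is a v-structure (with `a`, `c` non-adjacent). -/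
def DAGraph.vStruct {p : ℕ} (G : DAGraph p) (a b c : Fin p) : Prop :=
  a ≠ c ∧ G.E a b ∧ G.E c b ∧ ¬ G.skeleton.Adj a c

/-- The relation obtained from `E` by reversing the single edge `i → j`. -/
def reverseRel {p : ℕ} (E : Fin p → Fin p → Prop) (i j : Fin p) : Fin p → Fin p → Prop :=
  fun a b => (E a b ∧ ¬(a = i ∧ b = j)) ∨ (a = j ∧ b = i)

/-!
`c_G(S) = 1` iff some `i ∈ S` is a common child of the rest of `S`. If `|S| ≥ 4` and `i` is
such a vertex in `G`, it is one for every `S \ {x}`, `x ≠ i`, so by induction on `|S|` each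
of these sets has a common child `w_x` in `H`. By acyclicity of `H`, for two such `x ≠ y`
either `w_x = w_y`, which is then a common child of `S`, or `w_x = y`, or `w_y = x`.
For three such vertices `j, k, l` the last two options cannot hold for all three pairs: the
`w`'s would cycle through `{j, k, l}`, forcing a directed 3-cycle in `H`.
-/

section CommonChild

variable {α : Type*} [DecidableEq α] {E : α → α → Prop} {S : Finset α} {a b w : α}

def IsCommonChild (E : α → α → Prop) (S : Finset α) (i : α) : Prop :=
  i ∈ S ∧ ∀ j ∈ S, j ≠ i → E j i

def HasCommonChild (E : α → α → Prop) (S : Finset α) : Prop :=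
  ∃ i, IsCommonChild E S i

theorem IsCommonChild.erase (h : IsCommonChild E S w) (hb : b ≠ w) :
    IsCommonChild E (S.erase b) w :=
  ⟨Finset.mem_erase.2 ⟨hb.symm, h.1⟩, fun j hj => h.2 j (Finset.mem_of_mem_erase hj)⟩

theorem IsCommonChild.edge_of_erase (h : IsCommonChild E (S.erase a) w) {c : α} (hc : c ∈ S)
    (hca : c ≠ a) (hcw : c ≠ w) : E c w :=
  h.2 c (Finset.mem_erase.2 ⟨hca, hc⟩) hcw

theorem IsCommonChild.of_erase (hab : a ≠ b) (hwa : IsCommonChild E (S.erase a) w)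
    (hwb : IsCommonChild E (S.erase b) w) : IsCommonChild E S w := by
  refine ⟨Finset.mem_of_mem_erase hwa.1, fun c hc hcw => ?_⟩
  by_cases hca : c = a
  · exact hwb.edge_of_erase hc (hca ▸ hab) hcw
  · exact hwa.edge_of_erase hc hca hcw

theorem IsCommonChild.eq_or_eq_or_eq_of_erase (hE : ∀ x, ¬ Relation.TransGen E x x) {wa wb : α}
    (hwa : IsCommonChild E (S.erase a) wa) (hwb : IsCommonChild E (S.erase b) wb) :
    wa = wb ∨ b = wa ∨ a = wb := by
  by_contra! ⟨hne, hwa_b, hwb_a⟩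
  have hab : E wa wb := hwb.edge_of_erase (Finset.mem_of_mem_erase hwa.1) hwa_b.symm hne
  have hba : E wb wa := hwa.edge_of_erase (Finset.mem_of_mem_erase hwb.1) hwb_a.symm hne.symm
  exact hE wa (.tail (.single hab) hba)

theorem IsCommonChild.false_of_erase_cycle (hE : ∀ x, ¬ Relation.TransGen E x x) {j k l : α}
    (hj : j ∈ S) (hk : k ∈ S) (hl : l ∈ S) (hjk : j ≠ k) (hkl : k ≠ l) (hlj : l ≠ j)
    (hwj : IsCommonChild E (S.erase j) k) (hwk : IsCommonChild E (S.erase k) l)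
    (hwl : IsCommonChild E (S.erase l) j) : False :=
  hE l <| .tail (.tail (.single (hwj.edge_of_erase hl hlj hkl.symm))
    (hwl.edge_of_erase hk hkl hjk.symm)) (hwk.edge_of_erase hj hjk hlj.symm)

theorem HasCommonChild.of_erase_three (hE : ∀ x, ¬ Relation.TransGen E x x) {j k l : α}
    (hj : j ∈ S) (hk : k ∈ S) (hl : l ∈ S) (hjk : j ≠ k) (hjl : j ≠ l) (hkl : k ≠ l)
    (hSj : HasCommonChild E (S.erase j)) (hSk : HasCommonChild E (S.erase k))
    (hSl : HasCommonChild E (S.erase l)) : HasCommonChild E S := by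
  by_contra hS
  have erased : ∀ {a b wa wb}, a ≠ b → IsCommonChild E (S.erase a) wa →
      IsCommonChild E (S.erase b) wb → b = wa ∨ a = wb := fun hab hwa hwb =>
    (hwa.eq_or_eq_or_eq_of_erase hE hwb).resolve_left
      fun h => hS ⟨_, hwa.of_erase hab (h ▸ hwb)⟩
  obtain ⟨wj, hwj⟩ := hSj
  obtain ⟨wk, hwk⟩ := hSk
  obtain ⟨wl, hwl⟩ := hSl
  -- each `rfl` replaces a witness by an erased vertex; all but the two 3-cycles are then absurd
  rcases erased hjk hwj hwk with rfl | rfl <;> rcases erased hjl hwj hwl with rfl | rfl <;>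
    rcases erased hkl hwk hwl with rfl | rfl
  all_goals first
    | contradiction
    | exact hwj.false_of_erase_cycle hE hj hk hl hjk hkl hjl.symm hwk hwl
    | exact hwj.false_of_erase_cycle hE hj hl hk hjl hkl.symm hjk.symm hwl hwk

theorem HasCommonChild.of_card_two_three {F : α → α → Prop} (hF : ∀ x, ¬ Relation.TransGen F x x)
    (h : ∀ S : Finset α, S.card = 2 ∨ S.card = 3 → HasCommonChild E S → HasCommonChild F S)
    (hS : 2 ≤ S.card) (hES : HasCommonChild E S) : HasCommonChild F S := by
  induction S using Finset.strongInduction with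
  | H S ih =>
  rcases (by omega : S.card = 2 ∨ S.card = 3 ∨ 4 ≤ S.card) with hS2 | hS3 | hS4
  · exact h S (.inl hS2) hES
  · exact h S (.inr hS3) hES
  obtain ⟨i, hi⟩ := hES
  have erase_i : 2 < (S.erase i).card := by rw [Finset.card_erase_of_mem hi.1]; omega
  obtain ⟨j, hj, k, hk, l, hl, hjk, hjl, hkl⟩ := Finset.two_lt_card.1 erase_i
  have erase_other : ∀ x ∈ S.erase i, HasCommonChild F (S.erase x) := fun x hx =>
    have hxS := Finset.mem_of_mem_erase hx
    ih _ (Finset.erase_ssubset hxS) (by rw [Finset.card_erase_of_mem hxS]; omega)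
      ⟨i, hi.erase (Finset.ne_of_mem_erase hx)⟩
  exact .of_erase_three hF (Finset.mem_of_mem_erase hj) (Finset.mem_of_mem_erase hk)
    (Finset.mem_of_mem_erase hl) hjk hjl hkl (erase_other j hj) (erase_other k hk)
    (erase_other l hl)

end CommonChild

theorem imsetRel_eq_ite {p : ℕ} (E : Fin p → Fin p → Prop) (S : Finset (Fin p)) :
    imsetRel E S = if HasCommonChild E S then 1 else 0 := by
  unfold imsetRel HasCommonChild IsCommonChild
  congr

theorem imsetRel_eq_imsetRel_iff {p : ℕ} {E F : Fin p → Fin p → Prop} {S : Finset (Fin p)} :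
    imsetRel E S = imsetRel F S ↔ (HasCommonChild E S ↔ HasCommonChild F S) := by
  rw [imsetRel_eq_ite, imsetRel_eq_ite]
  split_ifs <;> simp_all

/-- Two DAGs `G`, `H` on `[p]` have equal characteristic imsets iff
they agree on all coordinates indexed by sets of cardinality 2 or 3. -/
theorem stmt1 {p : ℕ} (G H : DAGraph p) :
    (∀ S : Finset (Fin p), 2 ≤ S.card → G.cim S = H.cim S) ↔
      (∀ S : Finset (Fin p), S.card = 2 ∨ S.card = 3 → G.cim S = H.cim S) := by
  refine ⟨fun h S hS => h S (by omega), fun h S hS => imsetRel_eq_imsetRel_iff.2 ⟨?_, ?_⟩⟩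
  · exact .of_card_two_three H.acyclic (fun T hT => (imsetRel_eq_imsetRel_iff.1 (h T hT)).1) hS
  · exact .of_card_two_three G.acyclic (fun T hT => (imsetRel_eq_imsetRel_iff.1 (h T hT)).2) hS
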